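/- Let (A, μ, Δ, α, R) be a cobraided Hom-bialgebra over a commutative ring k with α-invariant R, and let (U, α_U), (V, α_V), (W, α_W) be A-comodules with structure maps written ρ(m) = Σ m_A ⊗ m_M. For u ∈ U, v ∈ V, w ∈ W, let θ = Σ R((v_A)₁ ⊗ (u_A)₁) R((w_A)₁ ⊗ (u_A)₂) R((w_A)₂ ⊗ (v_A)₂) α²(w_W) ⊗ α²(v_V) ⊗ α²(u_U) ∈ W ⊗ V ⊗ U, where the subscripts 1 and 2 denote the Sweedler components of Δ applied to u_A, v_A, w_A, and α² denotes the square of the relevant twisting map. Then (α_W ⊗ B_{U,V}) ∘ (B_{U,W} ⊗ α_V) ∘ (α_U ⊗ B_{V,W}) applied to u ⊗ v ⊗ w equals θ, where B_{X,Y}(x ⊗ y) = Σ R(y_A ⊗ x_A) y_Y ⊗ x_X. -/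

import Mathlib

open TensorProduct

/-- The axioms of a Hom-bialgebra (no unit or counit assumed):
multiplicativity and comultiplicativity of the twisting map `α`,
Hom-associativity, Hom-coassociativity, and the compatibility
`Δ(xy) = Σ x₁y₁ ⊗ x₂y₂` (stated via arbitrary finite representations of the
Sweedler sums). -/
def IsHomBialgebra (k : Type*) {A : Type*} [CommRing k] [AddCommGroup A] [Module k A]
    (μ : A →ₗ[k] A →ₗ[k] A) (Δ : A →ₗ[k] A ⊗[k] A) (α : A →ₗ[k] A) : Prop :=
  (∀ x y : A, α (μ x y) = μ (α x) (α y)) ∧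
  (∀ x y z : A, μ (α x) (μ y z) = μ (μ x y) (α z)) ∧
  (TensorProduct.map α α ∘ₗ Δ = Δ ∘ₗ α) ∧
  (TensorProduct.map α Δ ∘ₗ Δ =
    (TensorProduct.assoc k A A A).toLinearMap ∘ₗ TensorProduct.map Δ α ∘ₗ Δ) ∧
  (∀ (x y : A) (m n : ℕ) (x1 x2 : Fin m → A) (y1 y2 : Fin n → A),
    Δ x = ∑ i, x1 i ⊗ₜ[k] x2 i → Δ y = ∑ j, y1 j ⊗ₜ[k] y2 j →
    Δ (μ x y) = ∑ i, ∑ j, μ (x1 i) (y1 j) ⊗ₜ[k] μ (x2 i) (y2 j))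

/-- A cobraided Hom-bialgebra: a Hom-bialgebra together with a bilinear form `R`
satisfying the three axioms (i), (ii), (iii), stated via arbitrary finite
representations of the Sweedler sums. -/
def IsCobraidedHomBialgebra (k : Type*) {A : Type*} [CommRing k] [AddCommGroup A] [Module k A]
    (μ : A →ₗ[k] A →ₗ[k] A) (Δ : A →ₗ[k] A ⊗[k] A) (α : A →ₗ[k] A)
    (R : A →ₗ[k] A →ₗ[k] k) : Prop :=
  IsHomBialgebra k μ Δ α ∧
  (∀ (x y z : A) (n : ℕ) (z1 z2 : Fin n → A), Δ z = ∑ i, z1 i ⊗ₜ[k] z2 i →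
    R (μ x y) (α z) = ∑ i, R (α x) (z1 i) * R (α y) (z2 i)) ∧
  (∀ (x y z : A) (n : ℕ) (x1 x2 : Fin n → A), Δ x = ∑ i, x1 i ⊗ₜ[k] x2 i →
    R (α x) (μ y z) = ∑ i, R (x1 i) (α z) * R (x2 i) (α y)) ∧
  (∀ (x y : A) (m n : ℕ) (x1 x2 : Fin m → A) (y1 y2 : Fin n → A),
    Δ x = ∑ i, x1 i ⊗ₜ[k] x2 i → Δ y = ∑ j, y1 j ⊗ₜ[k] y2 j →
    ∑ i, ∑ j, R (x2 i) (y2 j) • μ (y1 j) (x1 i)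
      = ∑ i, ∑ j, R (x1 i) (y1 j) • μ (x2 i) (y2 j))

/-- A (classical) cobraided bialgebra, without unit, counit, or invertibility of `R`. -/
def IsCobraidedBialgebra (k : Type*) {A : Type*} [CommRing k] [AddCommGroup A] [Module k A]
    (μ : A →ₗ[k] A →ₗ[k] A) (Δ : A →ₗ[k] A ⊗[k] A) (R : A →ₗ[k] A →ₗ[k] k) : Prop :=
  (∀ x y z : A, μ (μ x y) z = μ x (μ y z)) ∧
  (TensorProduct.map LinearMap.id Δ ∘ₗ Δ =
    (TensorProduct.assoc k A A A).toLinearMap ∘ₗ TensorProduct.map Δ LinearMap.id ∘ₗ Δ) ∧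
  (∀ (x y : A) (m n : ℕ) (x1 x2 : Fin m → A) (y1 y2 : Fin n → A),
    Δ x = ∑ i, x1 i ⊗ₜ[k] x2 i → Δ y = ∑ j, y1 j ⊗ₜ[k] y2 j →
    Δ (μ x y) = ∑ i, ∑ j, μ (x1 i) (y1 j) ⊗ₜ[k] μ (x2 i) (y2 j)) ∧
  (∀ (x y z : A) (n : ℕ) (z1 z2 : Fin n → A), Δ z = ∑ i, z1 i ⊗ₜ[k] z2 i →
    R (μ x y) z = ∑ i, R x (z1 i) * R y (z2 i)) ∧
  (∀ (x y z : A) (n : ℕ) (x1 x2 : Fin n → A), Δ x = ∑ i, x1 i ⊗ₜ[k] x2 i →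
    R x (μ y z) = ∑ i, R (x1 i) z * R (x2 i) y) ∧
  (∀ (x y : A) (m n : ℕ) (x1 x2 : Fin m → A) (y1 y2 : Fin n → A),
    Δ x = ∑ i, x1 i ⊗ₜ[k] x2 i → Δ y = ∑ j, y1 j ⊗ₜ[k] y2 j →
    ∑ i, ∑ j, R (x2 i) (y2 j) • μ (y1 j) (x1 i)
      = ∑ i, ∑ j, R (x1 i) (y1 j) • μ (x2 i) (y2 j))

/-- A braided (quasi-triangular) Hom-bialgebra, with `R ∈ A ⊗ A`. -/
def IsBraidedHomBialgebra (k : Type*) {A : Type*} [CommRing k] [AddCommGroup A] [Module k A]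
    (μ : A →ₗ[k] A →ₗ[k] A) (Δ : A →ₗ[k] A ⊗[k] A) (α : A →ₗ[k] A)
    (Rel : A ⊗[k] A) : Prop :=
  IsHomBialgebra k μ Δ α ∧
  (∀ (n : ℕ) (s t : Fin n → A), Rel = ∑ i, s i ⊗ₜ[k] t i →
    TensorProduct.map Δ α Rel = ∑ i, ∑ j, (α (s i) ⊗ₜ[k] α (s j)) ⊗ₜ[k] μ (t i) (t j)) ∧
  (∀ (n : ℕ) (s t : Fin n → A), Rel = ∑ i, s i ⊗ₜ[k] t i →
    TensorProduct.map α Δ Rel = ∑ i, ∑ j, μ (s i) (s j) ⊗ₜ[k] (α (t j) ⊗ₜ[k] α (t i))) ∧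
  (∀ (x : A) (m n : ℕ) (x1 x2 : Fin m → A) (s t : Fin n → A),
    Δ x = ∑ i, x1 i ⊗ₜ[k] x2 i → Rel = ∑ i, s i ⊗ₜ[k] t i →
    ∑ i, ∑ j, μ (x2 i) (s j) ⊗ₜ[k] μ (x1 i) (t j)
      = ∑ i, ∑ j, μ (s j) (x1 i) ⊗ₜ[k] μ (t j) (x2 i))

/-- The convolution-type product on the dual induced by a comultiplication:
`⟨Δ*(φ ⊗ ψ), x⟩ = Σ φ(x₁) ψ(x₂)`. -/
noncomputable def deltaStar (k : Type*) {A : Type*} [CommRing k] [AddCommGroup A] [Module k A]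
    (Δ : A →ₗ[k] A ⊗[k] A) (φ ψ : Module.Dual k A) : Module.Dual k A :=
  TensorProduct.lift ((LinearMap.mul k k).compl₁₂ φ ψ) ∘ₗ Δ

/-- The bilinear version of `deltaStar`, `Δ* : A* →ₗ A* →ₗ A*`. -/
noncomputable def deltaStarBil (k : Type*) {A : Type*} [CommRing k] [AddCommGroup A] [Module k A]
    (Δ : A →ₗ[k] A ⊗[k] A) :
    Module.Dual k A →ₗ[k] Module.Dual k A →ₗ[k] Module.Dual k A :=
  TensorProduct.curry (Δ.dualMap ∘ₗ TensorProduct.dualDistrib k A A)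

/-- The dual comultiplication `μ* : A* → A* ⊗ A*` of a multiplication `μ` on a
finite free module, determined by `⟨μ*(φ), x ⊗ y⟩ = φ(xy)`. -/
noncomputable def mulStar (k : Type*) {A : Type*} [CommRing k] [AddCommGroup A] [Module k A]
    [Module.Finite k A] [Module.Free k A] (μ : A →ₗ[k] A →ₗ[k] A) :
    Module.Dual k A →ₗ[k] Module.Dual k A ⊗[k] Module.Dual k A :=
  (TensorProduct.dualDistribEquiv k A A).symm.toLinearMap ∘ₗ (TensorProduct.lift μ).dualMap

/-- The bilinear form `R̂` on the dual induced by an element `Rel = Σ sᵢ ⊗ tᵢ ∈ A ⊗ A`: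
`R̂(φ ⊗ ψ) = Σ φ(sᵢ) ψ(tᵢ)`. -/
noncomputable def rhat (k : Type*) {A : Type*} [CommRing k] [AddCommGroup A] [Module k A]
    (Rel : A ⊗[k] A) : Module.Dual k A →ₗ[k] Module.Dual k A →ₗ[k] k :=
  TensorProduct.curry (LinearMap.applyₗ (R := k) Rel ∘ₗ TensorProduct.dualDistrib k A A)

/-- A comodule `(M, α_M, ρ)` over a Hom-coassociative coalgebra `(A, Δ, α)`:
Hom-coassociativity and comultiplicativity of the structure map. -/
def IsComodule (k : Type*) {A M : Type*} [CommRing k] [AddCommGroup A] [Module k A]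
    [AddCommGroup M] [Module k M] (Δ : A →ₗ[k] A ⊗[k] A) (α : A →ₗ[k] A)
    (αM : M →ₗ[k] M) (ρ : M →ₗ[k] A ⊗[k] M) : Prop :=
  ((TensorProduct.assoc k A A M).toLinearMap ∘ₗ TensorProduct.map Δ αM ∘ₗ ρ
      = TensorProduct.map α ρ ∘ₗ ρ) ∧
  (TensorProduct.map α αM ∘ₗ ρ = ρ ∘ₗ αM)

/-- The map `B_{V,W} : V ⊗ W → W ⊗ V`, `B_{V,W}(v ⊗ w) = Σ R(w_A ⊗ v_A) w_W ⊗ v_V`,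
induced by comodule structure maps `ρ_V`, `ρ_W` and a bilinear form `R`. -/
noncomputable def Bmap (k : Type*) {A V W : Type*} [CommRing k] [AddCommGroup A] [Module k A]
    [AddCommGroup V] [Module k V] [AddCommGroup W] [Module k W]
    (R : A →ₗ[k] A →ₗ[k] k) (ρV : V →ₗ[k] A ⊗[k] V) (ρW : W →ₗ[k] A ⊗[k] W) :
    V ⊗[k] W →ₗ[k] W ⊗[k] V :=
  (TensorProduct.lid k (W ⊗[k] V)).toLinearMap
    ∘ₗ TensorProduct.map (TensorProduct.lift R) LinearMap.id
    ∘ₗ (TensorProduct.tensorTensorTensorComm k A W A V).toLinearMap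
    ∘ₗ TensorProduct.map ρW ρV
    ∘ₗ (TensorProduct.comm k V W).toLinearMap

/-- `B` is a solution of the Hom-Yang-Baxter equation for `(V, αV)`. -/
def IsHYBESolution (k : Type*) {V : Type*} [CommRing k] [AddCommGroup V] [Module k V]
    (αV : V →ₗ[k] V) (B : V ⊗[k] V →ₗ[k] V ⊗[k] V) : Prop :=
  (B ∘ₗ TensorProduct.map αV αV = TensorProduct.map αV αV ∘ₗ B) ∧
  ((TensorProduct.assoc k V V V).symm.toLinearMap
      ∘ₗ TensorProduct.map αV B
      ∘ₗ (TensorProduct.assoc k V V V).toLinearMap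
      ∘ₗ TensorProduct.map B αV
      ∘ₗ (TensorProduct.assoc k V V V).symm.toLinearMap
      ∘ₗ TensorProduct.map αV B
      ∘ₗ (TensorProduct.assoc k V V V).toLinearMap
    = TensorProduct.map B αV
      ∘ₗ (TensorProduct.assoc k V V V).symm.toLinearMap
      ∘ₗ TensorProduct.map αV B
      ∘ₗ (TensorProduct.assoc k V V V).toLinearMap
      ∘ₗ TensorProduct.map B αV)

/-- A (classical, possibly non-unital non-counital) bialgebra. -/
def IsBialgebraNC (k : Type*) {H : Type*} [CommRing k] [AddCommGroup H] [Module k H]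
    (μ : H →ₗ[k] H →ₗ[k] H) (Δ : H →ₗ[k] H ⊗[k] H) : Prop :=
  (∀ x y z : H, μ (μ x y) z = μ x (μ y z)) ∧
  (TensorProduct.map LinearMap.id Δ ∘ₗ Δ =
    (TensorProduct.assoc k H H H).toLinearMap ∘ₗ TensorProduct.map Δ LinearMap.id ∘ₗ Δ) ∧
  (∀ (x y : H) (m n : ℕ) (x1 x2 : Fin m → H) (y1 y2 : Fin n → H),
    Δ x = ∑ i, x1 i ⊗ₜ[k] x2 i → Δ y = ∑ j, y1 j ⊗ₜ[k] y2 j →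
    Δ (μ x y) = ∑ i, ∑ j, μ (x1 i) (y1 j) ⊗ₜ[k] μ (x2 i) (y2 j))

/-!
Expanding the three braidings by the coactions writes the composite on `u ⊗ v ⊗ w` as a sum in
which each of `u`, `v`, `w` enters through its iterated coaction `α(m_A) ⊗ ρ(m_M)`.
Hom-coassociativity of the comodules replaces it by `Δ(m_A) ⊗ α(m_M)`, and `α`-invariance of `R`
absorbs the twistings left on the coefficients. This yields the sum defining `θ`, but with
coefficient `R(w_A₁, v_A₁) R(w_A₂, u_A₁) R(v_A₂, u_A₂)`. The Yang–Baxter relation for `R`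
(axiom (iii) for `v_A, u_A`, paired with `α²(w_A)` and expanded by axiom (ii)) turns it into the
coefficient of `θ`.
-/

section Pairing

variable {k A X Y : Type*} [CommRing k] [AddCommGroup A] [Module k A]
  [AddCommGroup X] [Module k X] [AddCommGroup Y] [Module k Y]

noncomputable def pairMap (R : A →ₗ[k] A →ₗ[k] k) :
    (A ⊗[k] X) ⊗[k] (A ⊗[k] Y) →ₗ[k] X ⊗[k] Y :=
  (TensorProduct.lid k (X ⊗[k] Y)).toLinearMap
    ∘ₗ TensorProduct.map (TensorProduct.lift R) LinearMap.id
    ∘ₗ (TensorProduct.tensorTensorTensorComm k A X A Y).toLinearMap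

@[simp]
theorem pairMap_tmul (R : A →ₗ[k] A →ₗ[k] k) (a b : A) (x : X) (y : Y) :
    pairMap R ((a ⊗ₜ[k] x) ⊗ₜ[k] (b ⊗ₜ[k] y)) = R a b • (x ⊗ₜ[k] y) := by
  simp [pairMap]

theorem Bmap_tmul (R : A →ₗ[k] A →ₗ[k] k) (ρX : X →ₗ[k] A ⊗[k] X) (ρY : Y →ₗ[k] A ⊗[k] Y)
    (x : X) (y : Y) : Bmap k R ρX ρY (x ⊗ₜ[k] y) = pairMap R (ρY y ⊗ₜ[k] ρX x) :=
  rfl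

end Pairing

namespace IsComodule

variable {k A M N : Type*} [CommRing k] [AddCommGroup A] [Module k A]
  [AddCommGroup M] [Module k M] [AddCommGroup N] [Module k N]
  {Δ : A →ₗ[k] A ⊗[k] A} {α : A →ₗ[k] A} {αM : M →ₗ[k] M} {ρ : M →ₗ[k] A ⊗[k] M}

theorem coaction_twist (hM : IsComodule k Δ α αM ρ) (m : M) :
    ρ (αM m) = map α αM (ρ m) :=
  (LinearMap.congr_fun hM.2 m).symm

theorem coaction_twist_eq_sum (hM : IsComodule k Δ α αM ρ) {n : ℕ} {m : M}
    {a : Fin n → A} {x : Fin n → M} (hm : ρ m = ∑ i, a i ⊗ₜ[k] x i) :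
    ρ (αM m) = ∑ i, α (a i) ⊗ₜ[k] αM (x i) := by
  simp [hM.coaction_twist, hm]

theorem sum_smul_coaction (hM : IsComodule k Δ α αM ρ) {n d : ℕ} {m : M}
    {a : Fin n → A} {x : Fin n → M} (hm : ρ m = ∑ i, a i ⊗ₜ[k] x i)
    {a₁ a₂ : Fin n → Fin d → A} (ha : ∀ i, Δ (a i) = ∑ p, a₁ i p ⊗ₜ[k] a₂ i p)
    (φ : A →ₗ[k] k) (F : A ⊗[k] M →ₗ[k] N) :
    ∑ i, φ (α (a i)) • F (ρ (x i)) = ∑ i, ∑ p, φ (a₁ i p) • F (a₂ i p ⊗ₜ[k] αM (x i)) := by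
  have h := congrArg (lift (φ.smulRight F)) (LinearMap.congr_fun hM.1 m)
  simpa [hm, ha, sum_tmul] using h.symm

end IsComodule

section Braiding

variable {k A X Y : Type*} [CommRing k] [AddCommGroup A] [Module k A]
  [AddCommGroup X] [Module k X] [AddCommGroup Y] [Module k Y]
  {Δ : A →ₗ[k] A ⊗[k] A} {α : A →ₗ[k] A} (R : A →ₗ[k] A →ₗ[k] k)
  {αX : X →ₗ[k] X} {ρX : X →ₗ[k] A ⊗[k] X} {αY : Y →ₗ[k] Y} {ρY : Y →ₗ[k] A ⊗[k] Y}

theorem sum_smul_Bmap_tmul (hY : IsComodule k Δ α αY ρY)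
    {n : ℕ} {x : X} {xA : Fin n → A} {xX : Fin n → X} (hx : ρX x = ∑ i, xA i ⊗ₜ[k] xX i)
    {n' d' : ℕ} {y : Y} {yA : Fin n' → A} {yY : Fin n' → Y} (hy : ρY y = ∑ l, yA l ⊗ₜ[k] yY l)
    {yA₁ yA₂ : Fin n' → Fin d' → A} (hyA : ∀ l, Δ (yA l) = ∑ r, yA₁ l r ⊗ₜ[k] yA₂ l r)
    (φ : A →ₗ[k] k) :
    ∑ l, φ (α (yA l)) • Bmap k R ρX ρY (x ⊗ₜ[k] yY l)
      = ∑ l, ∑ r, ∑ i, (φ (yA₁ l r) * R (yA₂ l r) (xA i)) • (αY (yY l) ⊗ₜ[k] xX i) := by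
  simpa [Bmap_tmul, hx, tmul_sum, Finset.smul_sum, mul_smul] using
    hY.sum_smul_coaction hy hyA φ (pairMap R ∘ₗ (mk k _ _).flip (ρX x))

theorem sum_smul_Bmap_twist_tmul_twist (hinv : ∀ a b : A, R (α a) (α b) = R a b)
    (hX : IsComodule k Δ α αX ρX) (hY : IsComodule k Δ α αY ρY)
    {n d : ℕ} {x : X} {xA : Fin n → A} {xX : Fin n → X} (hx : ρX x = ∑ i, xA i ⊗ₜ[k] xX i)
    {xA₁ xA₂ : Fin n → Fin d → A} (hxA : ∀ i, Δ (xA i) = ∑ p, xA₁ i p ⊗ₜ[k] xA₂ i p)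
    {n' d' : ℕ} {y : Y} {yA : Fin n' → A} {yY : Fin n' → Y} (hy : ρY y = ∑ j, yA j ⊗ₜ[k] yY j)
    {yA₁ yA₂ : Fin n' → Fin d' → A} (hyA : ∀ j, Δ (yA j) = ∑ q, yA₁ j q ⊗ₜ[k] yA₂ j q)
    (φ ψ : A →ₗ[k] k) :
    ∑ i, ∑ j, (φ (α (yA j)) * ψ (α (xA i))) • Bmap k R ρX ρY (αX (xX i) ⊗ₜ[k] αY (yY j))
      = ∑ j, ∑ q, ∑ i, ∑ p, (φ (yA₁ j q) * ψ (xA₁ i p) * R (yA₂ j q) (xA₂ i p)) •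
          (αY (αY (yY j)) ⊗ₜ[k] αX (αX (xX i))) := by
  -- the summand once the coactions of the `xX i` are expanded, as a function of that of `yY j`
  set G : A ⊗[k] Y →ₗ[k] Y ⊗[k] X := ∑ i, ∑ p, ψ (xA₁ i p) •
    (pairMap R ∘ₗ (mk k _ _).flip (α (xA₂ i p) ⊗ₜ[k] αX (αX (xX i))) ∘ₗ map α αY) with hG
  have hGX (s : A ⊗[k] Y) : ∑ i, ψ (α (xA i)) •
      pairMap R (map α αY s ⊗ₜ[k] map α αX (ρX (xX i))) = G s := by
    simpa [hG] using
      hX.sum_smul_coaction hx hxA ψ (pairMap R ∘ₗ mk k _ _ (map α αY s) ∘ₗ map α αX)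
  calc _ = ∑ j, φ (α (yA j)) • G (ρY (yY j)) := by
        rw [Finset.sum_comm]
        simp only [← hGX, Bmap_tmul, hX.coaction_twist, hY.coaction_twist, mul_smul,
          Finset.smul_sum]
    _ = ∑ j, ∑ q, φ (yA₁ j q) • G (yA₂ j q ⊗ₜ[k] αY (yY j)) := hY.sum_smul_coaction hy hyA φ G
    _ = _ := by simp [hG, hinv, Finset.smul_sum, mul_smul]

end Braiding

theorem lhs_composite_tmul_eq_sum
    {k A U V W : Type*} [CommRing k] [AddCommGroup A] [Module k A]
    [AddCommGroup U] [Module k U] [AddCommGroup V] [Module k V]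
    [AddCommGroup W] [Module k W]
    {Δ : A →ₗ[k] A ⊗[k] A} {α : A →ₗ[k] A} {R : A →ₗ[k] A →ₗ[k] k}
    (hinv : ∀ x y : A, R (α x) (α y) = R x y)
    {αU : U →ₗ[k] U} {ρU : U →ₗ[k] A ⊗[k] U} (hU : IsComodule k Δ α αU ρU)
    {αV : V →ₗ[k] V} {ρV : V →ₗ[k] A ⊗[k] V} (hV : IsComodule k Δ α αV ρV)
    {αW : W →ₗ[k] W} {ρW : W →ₗ[k] A ⊗[k] W} (hW : IsComodule k Δ α αW ρW)
    {u : U} {v : V} {w : W} {nu nv nw : ℕ}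
    {uA : Fin nu → A} {uU : Fin nu → U} (hu : ρU u = ∑ i, uA i ⊗ₜ[k] uU i)
    {vA : Fin nv → A} {vV : Fin nv → V} (hv : ρV v = ∑ j, vA j ⊗ₜ[k] vV j)
    {wA : Fin nw → A} {wW : Fin nw → W} (hw : ρW w = ∑ l, wA l ⊗ₜ[k] wW l)
    {du dv dw : ℕ}
    {uA1 uA2 : Fin nu → Fin du → A} (hdu : ∀ i, Δ (uA i) = ∑ p, uA1 i p ⊗ₜ[k] uA2 i p)
    {vA1 vA2 : Fin nv → Fin dv → A} (hdv : ∀ j, Δ (vA j) = ∑ q, vA1 j q ⊗ₜ[k] vA2 j q)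
    {wA1 wA2 : Fin nw → Fin dw → A} (hdw : ∀ l, Δ (wA l) = ∑ r, wA1 l r ⊗ₜ[k] wA2 l r) :
    ((TensorProduct.assoc k W V U).symm.toLinearMap
        ∘ₗ map αW (Bmap k R ρU ρV)
        ∘ₗ (TensorProduct.assoc k W U V).toLinearMap
        ∘ₗ map (Bmap k R ρU ρW) αV
        ∘ₗ (TensorProduct.assoc k U W V).symm.toLinearMap
        ∘ₗ map αU (Bmap k R ρV ρW)
        ∘ₗ (TensorProduct.assoc k U V W).toLinearMap)
      ((u ⊗ₜ[k] v) ⊗ₜ[k] w)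
      = ∑ i, ∑ j, ∑ l, ∑ p, ∑ q, ∑ r,
          (R (wA1 l r) (vA1 j q) * R (wA2 l r) (uA1 i p) * R (vA2 j q) (uA2 i p)) •
            ((αW (αW (wW l)) ⊗ₜ[k] αV (αV (vV j))) ⊗ₜ[k] αU (αU (uU i))) := by
  have hsumW := fun j => congrArg
    ((TensorProduct.assoc k W V U).symm.toLinearMap ∘ₗ map αW (Bmap k R ρU ρV)
      ∘ₗ (TensorProduct.assoc k W U V).toLinearMap ∘ₗ (mk k _ _).flip (αV (vV j)))
    (sum_smul_Bmap_tmul R hW (hU.coaction_twist_eq_sum hu) hw hdw (R.flip (α (vA j))))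
  have hsumUV := fun l r => congrArg
    ((TensorProduct.assoc k W V U).symm.toLinearMap ∘ₗ mk k _ _ (αW (αW (wW l))))
    (sum_smul_Bmap_twist_tmul_twist R hinv hU hV hu hdu hv hdv (R (wA1 l r)) (R (wA2 l r)))
  simp only [map_sum, map_smul, LinearMap.comp_apply, LinearEquiv.coe_coe, mk_apply,
    LinearMap.flip_apply, map_tmul, assoc_tmul, assoc_symm_tmul, hinv] at hsumW hsumUV
  simp only [LinearMap.comp_apply, LinearEquiv.coe_coe, assoc_tmul, map_tmul, Bmap_tmul (ρX := ρV),
    hv, hw, sum_tmul, tmul_sum, map_sum, map_smul, pairMap_tmul, tmul_smul, assoc_symm_tmul, hsumW]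
  -- `Finset.sum_comm (γ := T)` moves every sum over `T` innermost: once to line the sums up with
  -- `hsumUV`, then for five index types in turn to reach the order `i, j, l, p, q, r`.
  simp only [Finset.sum_comm (γ := Fin nv)]
  simp only [hsumUV]
  simp only [Finset.sum_comm (γ := Fin nv)]
  simp only [Finset.sum_comm (γ := Fin nw)]
  simp only [Finset.sum_comm (γ := Fin du)]
  simp only [Finset.sum_comm (γ := Fin dv)]
  simp only [Finset.sum_comm (γ := Fin dw)]

theorem IsCobraidedHomBialgebra.R_yangBaxter {k A : Type*} [CommRing k] [AddCommGroup A]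
    [Module k A] {μ : A →ₗ[k] A →ₗ[k] A} {Δ : A →ₗ[k] A ⊗[k] A} {α : A →ₗ[k] A}
    {R : A →ₗ[k] A →ₗ[k] k} (h : IsCobraidedHomBialgebra k μ Δ α R)
    (hinv : ∀ x y : A, R (α x) (α y) = R x y) {a b c : A} {da db dc : ℕ}
    {a₁ a₂ : Fin da → A} {b₁ b₂ : Fin db → A} {c₁ c₂ : Fin dc → A}
    (ha : Δ a = ∑ p, a₁ p ⊗ₜ[k] a₂ p) (hb : Δ b = ∑ q, b₁ q ⊗ₜ[k] b₂ q)
    (hc : Δ c = ∑ r, c₁ r ⊗ₜ[k] c₂ r) :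
    ∑ p, ∑ q, ∑ r, R (c₁ r) (b₁ q) * R (c₂ r) (a₁ p) * R (b₂ q) (a₂ p)
      = ∑ p, ∑ q, ∑ r, R (b₁ q) (a₁ p) * R (c₁ r) (a₂ p) * R (c₂ r) (b₂ q) := by
  obtain ⟨⟨-, -, hΔα, -, -⟩, -, hR₂, hR₃⟩ := h
  have hΔc : Δ (α c) = ∑ r, α (c₁ r) ⊗ₜ[k] α (c₂ r) := by
    rw [← LinearMap.comp_apply, ← hΔα]
    simp [hc]
  have hRc (y z : A) : R (α (α c)) (μ y z) = ∑ r, R (c₁ r) z * R (c₂ r) y := by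
    simpa [hinv] using hR₂ (α c) y z dc _ _ hΔc
  have key := congrArg (R (α (α c))) (hR₃ b a db da b₁ b₂ a₁ a₂ hb ha)
  simp only [map_sum, map_smul, smul_eq_mul, hRc, Finset.mul_sum] at key
  simp only [Finset.sum_comm (γ := Fin db)] at key ⊢
  convert key using 4 <;> ring

/-- Lemma 7.9: the left-hand composite of the mixed HYBE
applied to `u ⊗ v ⊗ w` equals `θ`. -/
theorem lhs_composite_eq_theta
    (k : Type*) {A U V W : Type*} [CommRing k] [AddCommGroup A] [Module k A]
    [AddCommGroup U] [Module k U] [AddCommGroup V] [Module k V]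
    [AddCommGroup W] [Module k W]
    (μ : A →ₗ[k] A →ₗ[k] A) (Δ : A →ₗ[k] A ⊗[k] A) (α : A →ₗ[k] A)
    (R : A →ₗ[k] A →ₗ[k] k)
    (h : IsCobraidedHomBialgebra k μ Δ α R)
    (hinv : ∀ x y : A, R (α x) (α y) = R x y)
    (αU : U →ₗ[k] U) (ρU : U →ₗ[k] A ⊗[k] U) (hU : IsComodule k Δ α αU ρU)
    (αV : V →ₗ[k] V) (ρV : V →ₗ[k] A ⊗[k] V) (hV : IsComodule k Δ α αV ρV)
    (αW : W →ₗ[k] W) (ρW : W →ₗ[k] A ⊗[k] W) (hW : IsComodule k Δ α αW ρW)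
    (u : U) (v : V) (w : W)
    (nu nv nw : ℕ)
    (uA : Fin nu → A) (uU : Fin nu → U) (hu : ρU u = ∑ i, uA i ⊗ₜ[k] uU i)
    (vA : Fin nv → A) (vV : Fin nv → V) (hv : ρV v = ∑ j, vA j ⊗ₜ[k] vV j)
    (wA : Fin nw → A) (wW : Fin nw → W) (hw : ρW w = ∑ l, wA l ⊗ₜ[k] wW l)
    (du dv dw : ℕ)
    (uA1 uA2 : Fin nu → Fin du → A)
    (hdu : ∀ i, Δ (uA i) = ∑ p, uA1 i p ⊗ₜ[k] uA2 i p)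
    (vA1 vA2 : Fin nv → Fin dv → A)
    (hdv : ∀ j, Δ (vA j) = ∑ q, vA1 j q ⊗ₜ[k] vA2 j q)
    (wA1 wA2 : Fin nw → Fin dw → A)
    (hdw : ∀ l, Δ (wA l) = ∑ r, wA1 l r ⊗ₜ[k] wA2 l r) :
    ((TensorProduct.assoc k W V U).symm.toLinearMap
        ∘ₗ TensorProduct.map αW (Bmap k R ρU ρV)
        ∘ₗ (TensorProduct.assoc k W U V).toLinearMap
        ∘ₗ TensorProduct.map (Bmap k R ρU ρW) αV
        ∘ₗ (TensorProduct.assoc k U W V).symm.toLinearMap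
        ∘ₗ TensorProduct.map αU (Bmap k R ρV ρW)
        ∘ₗ (TensorProduct.assoc k U V W).toLinearMap)
      ((u ⊗ₜ[k] v) ⊗ₜ[k] w)
      = ∑ i, ∑ j, ∑ l, ∑ p, ∑ q, ∑ r,
          (R (vA1 j q) (uA1 i p) * R (wA1 l r) (uA2 i p) * R (wA2 l r) (vA2 j q)) •
            ((αW (αW (wW l)) ⊗ₜ[k] αV (αV (vV j))) ⊗ₜ[k] αU (αU (uU i))) := by
  rw [lhs_composite_tmul_eq_sum hinv hU hV hW hu hv hw hdu hdv hdw]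
  refine Finset.sum_congr rfl fun i _ => Finset.sum_congr rfl fun j _ =>
    Finset.sum_congr rfl fun l _ => ?_
  simp only [← Finset.sum_smul]
  rw [h.R_yangBaxter hinv (hdu i) (hdv j) (hdw l)]
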